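/- arXiv:2507.08229 — 3 statements merged into one kernel-verified Lean document; each statement's English description precedes it below -/
import Mathlib

section
/- Let (X, μ) be a measure space, N ≥ 1 an integer, and p > 1 a real number. If (F_k) is a sequence in L^p(X, μ; ℝ^N) converging to F in the L^p norm, then the sequence of functions x ↦ |F_k(x)|^{p−2}F_k(x) converges to x ↦ |F(x)|^{p−2}F(x) in L^{p/(p−1)}(X, μ; ℝ^N); that is, ∫_X | |F_k|^{p−2}F_k − |F|^{p−2}F |^{p/(p−1)} dμ → 0 as k → ∞. -/
/-!
The map `φ z = |z|^{p-2} z` is continuous and satisfies `|φ z|^{p/(p-1)} = |z|^p`, so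
`‖φ ∘ f‖_{p/(p-1)} = ‖f‖_p^{p-1}`, also for `f` restricted to any set. Hence uniform
integrability and uniform tightness of `(F_k)` in `L^p` carry over to `(φ ∘ F_k)` in
`L^{p/(p-1)}`; convergence in measure gives a.e. convergent subsequences, which `φ` preserves,
and Vitali's convergence theorem yields `φ ∘ F_k → φ ∘ F` in `L^{p/(p-1)}`.
-/

open MeasureTheory Filter
open scoped ENNReal NNReal

section

variable {E : Type*} [NormedAddCommGroup E] {X : Type*} [MeasurableSpace X] {μ : Measure X}

lemma integral_norm_rpow_eq_toReal_eLpNorm_rpow {q : ℝ} (hq : 0 < q) {f : X → E}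
    (hf : AEStronglyMeasurable f μ) :
    ∫ x, ‖f x‖ ^ q ∂μ = (eLpNorm f (ENNReal.ofReal q) μ).toReal ^ q := by
  rw [toReal_eLpNorm hf, lpNorm_eq_integral_norm_rpow_toReal (by simpa using hq)
    ENNReal.ofReal_ne_top hf, ENNReal.toReal_ofReal hq.le,
    Real.rpow_inv_rpow (integral_nonneg fun _ => by positivity) hq.ne']

lemma MeasureTheory.UnifIntegrable.comp {ι κ : Type*} {p : ℝ≥0∞} {f : ι → X → E}
    (hf : UnifIntegrable f p μ) (φ : κ → ι) : UnifIntegrable (f ∘ φ) p μ :=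
  fun _ hε => let ⟨δ, hδ, hfδ⟩ := hf hε; ⟨δ, hδ, fun i => hfδ (φ i)⟩

lemma MeasureTheory.UnifTight.comp {ι κ : Type*} {p : ℝ≥0∞} {f : ι → X → E}
    (hf : UnifTight f p μ) (φ : κ → ι) : UnifTight (f ∘ φ) p μ :=
  fun _ hε => let ⟨s, hμs, hfs⟩ := hf hε; ⟨s, hμs, fun i => hfs (φ i)⟩

lemma tendsto_integral_norm_rpow_of_tendsto_eLpNorm {q : ℝ} (hq : 0 < q) {f : ℕ → X → E}
    (hf : ∀ k, AEStronglyMeasurable (f k) μ)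
    (hlim : Tendsto (fun k => eLpNorm (f k) (ENNReal.ofReal q) μ) atTop (nhds 0)) :
    Tendsto (fun k => ∫ x, ‖f k x‖ ^ q ∂μ) atTop (nhds 0) := by
  simp_rw [integral_norm_rpow_eq_toReal_eLpNorm_rpow hq (hf _)]
  have hpow : Tendsto (fun t : ℝ => t ^ q) (nhds 0) (nhds 0) := by
    simpa [Real.zero_rpow hq.ne'] using
      (Real.continuousAt_rpow_const 0 q (Or.inr hq.le)).tendsto
  simpa [Function.comp_def] using
    hpow.comp ((ENNReal.tendsto_toReal ENNReal.zero_ne_top).comp hlim)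

variable [NormedSpace ℝ E]

noncomputable def normPowSMul (p : ℝ) (z : E) : E := ‖z‖ ^ (p - 2) • z

@[simp]
lemma normPowSMul_zero (p : ℝ) : normPowSMul p (0 : E) = 0 := smul_zero _

lemma norm_normPowSMul {p : ℝ} (hp : p ≠ 1) (z : E) :
    ‖normPowSMul p z‖ = ‖z‖ ^ (p - 1) := by
  rcases eq_or_ne z 0 with rfl | hz
  · simp [Real.zero_rpow (sub_ne_zero.mpr hp)]
  · have hz : 0 < ‖z‖ := norm_pos_iff.mpr hz
    rw [normPowSMul, norm_smul, Real.norm_of_nonneg (by positivity), ← Real.rpow_add_one hz.ne']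
    ring_nf

lemma continuous_normPowSMul {p : ℝ} (hp : 1 < p) : Continuous (normPowSMul p : E → E) := by
  refine continuous_iff_continuousAt.mpr fun z => ?_
  rcases eq_or_ne z 0 with rfl | hz
  · -- at the origin, `‖z‖ ^ (p - 2)` may blow up but `‖normPowSMul p z‖ = ‖z‖ ^ (p - 1) → 0`
    have hpow : Tendsto (fun t : ℝ => t ^ (p - 1)) (nhds 0) (nhds 0) := by
      simpa [Real.zero_rpow (by linarith : p - 1 ≠ 0)] using
        (Real.continuousAt_rpow_const 0 (p - 1) (Or.inr (by linarith))).tendsto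
    rw [ContinuousAt, normPowSMul_zero]
    exact squeeze_zero_norm (fun z => (norm_normPowSMul hp.ne' z).le)
      (hpow.comp tendsto_norm_zero)
  · exact ((Real.continuousAt_rpow_const _ _ (Or.inl (norm_ne_zero_iff.mpr hz))).comp
      continuous_norm.continuousAt).smul continuousAt_id

lemma indicator_normPowSMul {α : Type*} (p : ℝ) (f : α → E) (s : Set α) :
    s.indicator (fun x => normPowSMul p (f x)) = fun x => normPowSMul p (s.indicator f x) := by
  ext x
  by_cases hx : x ∈ s <;> simp [hx]

lemma eLpNorm_normPowSMul {p : ℝ} (hp : 1 < p) (f : X → E) :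
    eLpNorm (fun x => normPowSMul p (f x)) (ENNReal.ofReal (p / (p - 1))) μ
      = eLpNorm f (ENNReal.ofReal p) μ ^ (p - 1) := by
  have hp1 : 0 < p - 1 := by linarith
  rw [← eLpNorm_norm]
  simp_rw [norm_normPowSMul hp.ne']
  rw [eLpNorm_norm_rpow f hp1, ← ENNReal.ofReal_mul (by positivity), div_mul_cancel₀ _ hp1.ne']

lemma eLpNorm_indicator_normPowSMul {p : ℝ} (hp : 1 < p) (f : X → E) (s : Set X) :
    eLpNorm (s.indicator fun x => normPowSMul p (f x)) (ENNReal.ofReal (p / (p - 1))) μ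
      = eLpNorm (s.indicator f) (ENNReal.ofReal p) μ ^ (p - 1) := by
  rw [indicator_normPowSMul, eLpNorm_normPowSMul hp]

lemma unifIntegrable_normPowSMul {p : ℝ} (hp : 1 < p) {ι : Type*} {f : ι → X → E}
    (hf : UnifIntegrable f (ENNReal.ofReal p) μ) :
    UnifIntegrable (fun k x => normPowSMul p (f k x)) (ENNReal.ofReal (p / (p - 1))) μ := by
  have hp1 : 0 < p - 1 := by linarith
  intro ε hε
  obtain ⟨δ, hδ, hfδ⟩ := hf (Real.rpow_pos_of_pos hε (p - 1)⁻¹)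
  refine ⟨δ, hδ, fun k s hs hμs => ?_⟩
  calc eLpNorm (s.indicator fun x => normPowSMul p (f k x)) _ μ
      = eLpNorm (s.indicator (f k)) (ENNReal.ofReal p) μ ^ (p - 1) :=
        eLpNorm_indicator_normPowSMul hp _ _
    _ ≤ ENNReal.ofReal (ε ^ (p - 1)⁻¹) ^ (p - 1) :=
        ENNReal.rpow_le_rpow (hfδ k s hs hμs) hp1.le
    _ = ENNReal.ofReal ε := by
        rw [ENNReal.ofReal_rpow_of_nonneg (by positivity) hp1.le,
          Real.rpow_inv_rpow hε.le hp1.ne']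

lemma unifTight_normPowSMul {p : ℝ} (hp : 1 < p) {ι : Type*} {f : ι → X → E}
    (hf : UnifTight f (ENNReal.ofReal p) μ) :
    UnifTight (fun k x => normPowSMul p (f k x)) (ENNReal.ofReal (p / (p - 1))) μ := by
  have hp1 : 0 < p - 1 := by linarith
  intro ε hε
  obtain ⟨s, hμs, hfs⟩ := hf (NNReal.rpow_pos (p := (p - 1)⁻¹) hε)
  refine ⟨s, hμs, fun k => ?_⟩
  calc eLpNorm (sᶜ.indicator fun x => normPowSMul p (f k x)) _ μ
      = eLpNorm (sᶜ.indicator (f k)) (ENNReal.ofReal p) μ ^ (p - 1) :=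
        eLpNorm_indicator_normPowSMul hp _ _
    _ ≤ ((ε ^ (p - 1)⁻¹ : ℝ≥0) : ℝ≥0∞) ^ (p - 1) := ENNReal.rpow_le_rpow (hfs k) hp1.le
    _ = ε := by
        rw [← ENNReal.coe_rpow_of_nonneg _ hp1.le, NNReal.rpow_inv_rpow hp1.ne']

lemma memLp_normPowSMul {p : ℝ} (hp : 1 < p) {f : X → E} (hf : MemLp f (ENNReal.ofReal p) μ) :
    MemLp (fun x => normPowSMul p (f x)) (ENNReal.ofReal (p / (p - 1))) μ := by
  refine ⟨(continuous_normPowSMul hp).comp_aestronglyMeasurable hf.1, ?_⟩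
  rw [eLpNorm_normPowSMul hp]
  exact ENNReal.rpow_lt_top_of_nonneg (by linarith) hf.eLpNorm_ne_top

lemma tendsto_eLpNorm_normPowSMul_sub {p : ℝ} (hp : 1 < p) {f : ℕ → X → E} {g : X → E}
    (hf : ∀ k, MemLp (f k) (ENNReal.ofReal p) μ) (hg : MemLp g (ENNReal.ofReal p) μ)
    (hfg : Tendsto (fun k => eLpNorm (f k - g) (ENNReal.ofReal p) μ) atTop (nhds 0)) :
    Tendsto (fun k => eLpNorm ((fun x => normPowSMul p (f k x)) - fun x => normPowSMul p (g x))
      (ENNReal.ofReal (p / (p - 1))) μ) atTop (nhds 0) := by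
  have hP : 1 ≤ ENNReal.ofReal p := ENNReal.one_le_ofReal.mpr hp.le
  have hQ : 1 ≤ ENNReal.ofReal (p / (p - 1)) :=
    ENNReal.one_le_ofReal.mpr ((one_le_div (by linarith)).mpr (by linarith))
  obtain ⟨hmeas, hui, hut⟩ :=
    (tendstoInMeasure_iff_tendsto_Lp hP ENNReal.ofReal_ne_top hf hg).mpr hfg
  refine tendsto_of_subseq_tendsto fun ns hns => ?_
  obtain ⟨ms, -, hms⟩ := TendstoInMeasure.exists_seq_tendsto_ae
    (fun ε hε => (hmeas ε hε).comp hns)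
  refine ⟨ms, tendsto_Lp_of_tendsto_ae hQ ENNReal.ofReal_ne_top
    (fun i => (memLp_normPowSMul hp (hf _)).1) (memLp_normPowSMul hp hg)
    ((unifIntegrable_normPowSMul hp hui).comp (ns ∘ ms))
    ((unifTight_normPowSMul hp hut).comp (ns ∘ ms)) ?_⟩
  filter_upwards [hms] with x hx
  exact ((continuous_normPowSMul hp).tendsto (g x)).comp hx

end

theorem stmt_3_general {X : Type*} [MeasurableSpace X] (μ : Measure X)
    (N : ℕ) (p : ℝ) (hp : 1 < p) [Fact (1 ≤ ENNReal.ofReal p)]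
    (Fk : ℕ → Lp (EuclideanSpace ℝ (Fin N)) (ENNReal.ofReal p) μ)
    (F : Lp (EuclideanSpace ℝ (Fin N)) (ENNReal.ofReal p) μ)
    (hconv : Tendsto Fk atTop (nhds F)) :
    Tendsto
      (fun k => ∫ x,
        ‖(‖Fk k x‖ ^ (p - 2)) • Fk k x - (‖F x‖ ^ (p - 2)) • F x‖ ^ (p / (p - 1)) ∂μ)
      atTop (nhds 0) := by
  have hφF : Tendsto (fun k => eLpNorm ((fun x => normPowSMul p (Fk k x)) -
      fun x => normPowSMul p (F x)) (ENNReal.ofReal (p / (p - 1))) μ) atTop (nhds 0) :=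
    tendsto_eLpNorm_normPowSMul_sub hp (fun k => Lp.memLp (Fk k)) (Lp.memLp F)
      ((Lp.tendsto_Lp_iff_tendsto_eLpNorm' Fk F).mp hconv)
  exact tendsto_integral_norm_rpow_of_tendsto_eLpNorm (div_pos (by linarith) (by linarith))
    (fun k => ((memLp_normPowSMul hp (Lp.memLp (Fk k))).sub
      (memLp_normPowSMul hp (Lp.memLp F))).aestronglyMeasurable) hφF

/-- If `F_k → F` in `L^p(X, μ; ℝ^N)`, then `|F_k|^{p-2} F_k → |F|^{p-2} F` in
`L^{p/(p-1)}(X, μ; ℝ^N)`. -/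
theorem stmt_3 {X : Type*} [MeasurableSpace X] (μ : Measure X)
    (N : ℕ) (hN : 1 ≤ N) (p : ℝ) (hp : 1 < p) [Fact (1 ≤ ENNReal.ofReal p)]
    (Fk : ℕ → Lp (EuclideanSpace ℝ (Fin N)) (ENNReal.ofReal p) μ)
    (F : Lp (EuclideanSpace ℝ (Fin N)) (ENNReal.ofReal p) μ)
    (hconv : Tendsto Fk atTop (nhds F)) :
    Tendsto
      (fun k => ∫ x,
        ‖(‖Fk k x‖ ^ (p - 2)) • Fk k x - (‖F x‖ ^ (p - 2)) • F x‖ ^ (p / (p - 1)) ∂μ)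
      atTop (nhds 0) :=
  stmt_3_general μ N p hp Fk F hconv
end

section
/- Let (X, μ) be a measure space, N ≥ 1 an integer, and θ > 1 a real number. For all F, G ∈ L^θ(X, μ; ℝ^N), the function x ↦ (|F(x)|^{θ−2}F(x) − |G(x)|^{θ−2}G(x)) · (F(x) − G(x)) is integrable and ∫_X (|F|^{θ−2}F − |G|^{θ−2}G) · (F − G) dμ ≥ ( ‖F‖_θ^{θ−1} − ‖G‖_θ^{θ−1} ) ( ‖F‖_θ − ‖G‖_θ ) ≥ 0, where · is the Euclidean inner product on ℝ^N. -/
open MeasureTheory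
open scoped RealInnerProductSpace

/-!
Write `J u = |u|^{θ-2} u`, so that `J u · u = |u|^θ` and `|J u| = |u|^{θ-1}`. By Cauchy–Schwarz,
pointwise `(J F - J G) · (F - G) ≥ |F|^θ + |G|^θ - |F|^{θ-1}|G| - |G|^{θ-1}|F|`, and the cross terms
are integrable by Hölder with exponents `θ/(θ-1)` and `θ`, which moreover bounds
`∫ |F|^{θ-1}|G| ≤ ‖F‖^{θ-1} ‖G‖`. Integrating, the lower bound becomes
`‖F‖^θ + ‖G‖^θ - ‖F‖^{θ-1}‖G‖ - ‖G‖^{θ-1}‖F‖ = (‖F‖^{θ-1} - ‖G‖^{θ-1})(‖F‖ - ‖G‖)`,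
which is nonnegative because `t ↦ t^{θ-1}` is monotone.
-/

namespace Real

variable {a b x y : ℝ}

lemma rpow_sub_one_mul_self (hx : 0 ≤ x) (hy : y ≠ 0) : x ^ (y - 1) * x = x ^ y := by
  simpa using (rpow_add_one' hx (by simpa using hy) : x ^ (y - 1 + 1) = _).symm

lemma holderConjugate_div_sub_one (hy : 1 < y) : (y / (y - 1)).HolderConjugate y :=
  (HolderConjugate.conjExponent hy).symm

lemma rpow_add_rpow_sub_rpow_sub_one_mul (hy : y ≠ 0) (ha : 0 ≤ a) (hb : 0 ≤ b) :
    a ^ y + b ^ y - a ^ (y - 1) * b - b ^ (y - 1) * a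
      = (a ^ (y - 1) - b ^ (y - 1)) * (a - b) := by
  rw [← rpow_sub_one_mul_self ha hy, ← rpow_sub_one_mul_self hb hy]
  ring

lemma rpow_sub_one_sub_mul_sub_nonneg (hy : 1 ≤ y) (ha : 0 ≤ a) (hb : 0 ≤ b) :
    0 ≤ (a ^ (y - 1) - b ^ (y - 1)) * (a - b) := by
  have hy' : 0 ≤ y - 1 := by linarith
  rcases le_total a b with h | h
  · exact mul_nonneg_of_nonpos_of_nonpos (sub_nonpos.2 (rpow_le_rpow ha h hy')) (sub_nonpos.2 h)
  · exact mul_nonneg (sub_nonneg.2 (rpow_le_rpow hb h hy')) (sub_nonneg.2 h)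

end Real

section InnerProductSpace

variable {E : Type*} [NormedAddCommGroup E] [InnerProductSpace ℝ E] {θ : ℝ}

lemma inner_rpow_sub_two_smul_self (hθ : θ ≠ 0) (u : E) : ⟪‖u‖ ^ (θ - 2) • u, u⟫ = ‖u‖ ^ θ := by
  have h := Real.rpow_add_natCast' (norm_nonneg u) (show θ - 2 + (2 : ℕ) ≠ 0 by simpa using hθ)
  rw [real_inner_smul_left, real_inner_self_eq_norm_sq]
  simpa using h.symm

lemma norm_rpow_sub_two_smul (hθ : θ ≠ 1) (u : E) : ‖‖u‖ ^ (θ - 2) • u‖ = ‖u‖ ^ (θ - 1) := by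
  have h := Real.rpow_sub_one_mul_self (norm_nonneg u) (sub_ne_zero.2 hθ)
  rw [sub_sub, one_add_one_eq_two] at h
  rw [norm_smul, Real.norm_of_nonneg (by positivity), h]

lemma abs_inner_rpow_sub_two_smul_le (hθ : θ ≠ 1) (u w : E) :
    |⟪‖u‖ ^ (θ - 2) • u, w⟫| ≤ ‖u‖ ^ (θ - 1) * ‖w‖ :=
  norm_rpow_sub_two_smul hθ u ▸ abs_real_inner_le_norm _ _

lemma inner_rpow_sub_two_smul_sub_eq (hθ : θ ≠ 0) (u v : E) :
    ⟪‖u‖ ^ (θ - 2) • u - ‖v‖ ^ (θ - 2) • v, u - v⟫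
      = ‖u‖ ^ θ + ‖v‖ ^ θ - ⟪‖u‖ ^ (θ - 2) • u, v⟫ - ⟪‖v‖ ^ (θ - 2) • v, u⟫ := by
  rw [inner_sub_left, inner_sub_right, inner_sub_right, inner_rpow_sub_two_smul_self hθ,
    inner_rpow_sub_two_smul_self hθ]
  ring

lemma le_inner_rpow_sub_two_smul_sub (hθ₀ : θ ≠ 0) (hθ₁ : θ ≠ 1) (u v : E) :
    ‖u‖ ^ θ + ‖v‖ ^ θ - ‖u‖ ^ (θ - 1) * ‖v‖ - ‖v‖ ^ (θ - 1) * ‖u‖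
      ≤ ⟪‖u‖ ^ (θ - 2) • u - ‖v‖ ^ (θ - 2) • v, u - v⟫ := by
  rw [inner_rpow_sub_two_smul_sub_eq hθ₀]
  linarith [(abs_le.1 (abs_inner_rpow_sub_two_smul_le hθ₁ u v)).2,
    (abs_le.1 (abs_inner_rpow_sub_two_smul_le hθ₁ v u)).2]

lemma abs_inner_rpow_sub_two_smul_sub_le (hθ₀ : θ ≠ 0) (hθ₁ : θ ≠ 1) (u v : E) :
    |⟪‖u‖ ^ (θ - 2) • u - ‖v‖ ^ (θ - 2) • v, u - v⟫|
      ≤ ‖u‖ ^ θ + ‖v‖ ^ θ + ‖u‖ ^ (θ - 1) * ‖v‖ + ‖v‖ ^ (θ - 1) * ‖u‖ := by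
  have huv := abs_le.1 (abs_inner_rpow_sub_two_smul_le hθ₁ u v)
  have hvu := abs_le.1 (abs_inner_rpow_sub_two_smul_le hθ₁ v u)
  have hu : 0 ≤ ‖u‖ ^ θ := by positivity
  have hv : 0 ≤ ‖v‖ ^ θ := by positivity
  rw [inner_rpow_sub_two_smul_sub_eq hθ₀, abs_le]
  constructor <;> linarith

end InnerProductSpace

namespace MeasureTheory

variable {X E : Type*} [MeasurableSpace X] {μ : Measure X} [NormedAddCommGroup E] {θ : ℝ}
  {f g : X → E}

lemma MemLp.integrable_norm_rpow_ofReal (hθ : 0 < θ) (hf : MemLp f (ENNReal.ofReal θ) μ) :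
    Integrable (fun x => ‖f x‖ ^ θ) μ := by
  simpa [hθ.le] using hf.integrable_norm_rpow (by simpa using hθ) ENNReal.ofReal_ne_top

lemma MemLp.norm_rpow_sub_one (hθ : 1 < θ) (hf : MemLp f (ENNReal.ofReal θ) μ) :
    MemLp (fun x => ‖f x‖ ^ (θ - 1)) (ENNReal.ofReal (θ / (θ - 1))) μ := by
  have h := hf.norm_rpow_div (ENNReal.ofReal (θ - 1))
  rwa [ENNReal.toReal_ofReal (by linarith), ← ENNReal.ofReal_div_of_pos (by linarith)] at h

lemma MemLp.integrable_norm_rpow_sub_one_mul_norm (hθ : 1 < θ)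
    (hf : MemLp f (ENNReal.ofReal θ) μ) (hg : MemLp g (ENNReal.ofReal θ) μ) :
    Integrable (fun x => ‖f x‖ ^ (θ - 1) * ‖g x‖) μ := by
  have := (Real.holderConjugate_div_sub_one hθ).ennrealOfReal
  exact (hf.norm_rpow_sub_one hθ).integrable_mul hg.norm

lemma Lp.norm_nonneg' {p : ENNReal} (F : Lp E p μ) : 0 ≤ ‖F‖ := ENNReal.toReal_nonneg

lemma Lp.integral_norm_rpow_eq (hθ : 0 < θ) (F : Lp E (ENNReal.ofReal θ) μ) :
    ∫ x, ‖F x‖ ^ θ ∂μ = ‖F‖ ^ θ := by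
  have hI : 0 ≤ ∫ x, ‖F x‖ ^ θ ∂μ := integral_nonneg fun x => by positivity
  rw [Lp.norm_def, (Lp.memLp F).eLpNorm_eq_integral_rpow_norm (by simpa using hθ)
    ENNReal.ofReal_ne_top, ENNReal.toReal_ofReal hθ.le, ENNReal.toReal_ofReal (by positivity),
    ← Real.rpow_mul hI, inv_mul_cancel₀ hθ.ne', Real.rpow_one]

lemma Lp.integral_norm_rpow_sub_one_mul_norm_le (hθ : 1 < θ) (F G : Lp E (ENNReal.ofReal θ) μ) :
    ∫ x, ‖F x‖ ^ (θ - 1) * ‖G x‖ ∂μ ≤ ‖F‖ ^ (θ - 1) * ‖G‖ := by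
  have hθ₀ : 0 < θ := by linarith
  have hθ₁ : θ - 1 ≠ 0 := by linarith
  have hpow : ∀ x, (‖F x‖ ^ (θ - 1)) ^ (θ / (θ - 1)) = ‖F x‖ ^ θ := fun x => by
    rw [← Real.rpow_mul (by positivity), mul_div_cancel₀ _ hθ₁]
  have h := integral_mul_le_Lp_mul_Lq_of_nonneg (Real.holderConjugate_div_sub_one hθ)
    (.of_forall fun x => by positivity) (.of_forall fun x => norm_nonneg (G x))
    ((Lp.memLp F).norm_rpow_sub_one hθ) (Lp.memLp G).norm
  simp_rw [hpow, Lp.integral_norm_rpow_eq hθ₀] at h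
  rwa [← Real.rpow_mul (Lp.norm_nonneg' F), ← Real.rpow_mul (Lp.norm_nonneg' G), one_div_div,
    mul_div_cancel₀ _ hθ₀.ne', mul_one_div_cancel hθ₀.ne', Real.rpow_one] at h

variable [InnerProductSpace ℝ E]

lemma MemLp.integrable_inner_rpow_sub_two_smul_sub (hθ : 1 < θ)
    (hf : MemLp f (ENNReal.ofReal θ) μ) (hg : MemLp g (ENNReal.ofReal θ) μ) :
    Integrable (fun x => ⟪‖f x‖ ^ (θ - 2) • f x - ‖g x‖ ^ (θ - 2) • g x, f x - g x⟫) μ := by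
  have hθ₀ : 0 < θ := by linarith
  have hf' := hf.aestronglyMeasurable
  have hg' := hg.aestronglyMeasurable
  refine Integrable.mono' ((((hf.integrable_norm_rpow_ofReal hθ₀).add
    (hg.integrable_norm_rpow_ofReal hθ₀)).add
    (hf.integrable_norm_rpow_sub_one_mul_norm hθ hg)).add
    (hg.integrable_norm_rpow_sub_one_mul_norm hθ hf))
    (((hf'.norm.aemeasurable.pow_const _).aestronglyMeasurable.smul hf').sub
      ((hg'.norm.aemeasurable.pow_const _).aestronglyMeasurable.smul hg') |>.inner (hf'.sub hg'))
    (.of_forall fun x => abs_inner_rpow_sub_two_smul_sub_le hθ₀.ne' hθ.ne' (f x) (g x))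

theorem Lp.rpow_sub_one_sub_mul_sub_le_integral_inner (hθ : 1 < θ)
    (F G : Lp E (ENNReal.ofReal θ) μ) :
    (‖F‖ ^ (θ - 1) - ‖G‖ ^ (θ - 1)) * (‖F‖ - ‖G‖)
      ≤ ∫ x, ⟪‖F x‖ ^ (θ - 2) • F x - ‖G x‖ ^ (θ - 2) • G x, F x - G x⟫ ∂μ := by
  have hθ₀ : 0 < θ := by linarith
  have hF := (Lp.memLp F).integrable_norm_rpow_ofReal hθ₀
  have hG := (Lp.memLp G).integrable_norm_rpow_ofReal hθ₀
  have hFG := (Lp.memLp F).integrable_norm_rpow_sub_one_mul_norm hθ (Lp.memLp G)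
  have hGF := (Lp.memLp G).integrable_norm_rpow_sub_one_mul_norm hθ (Lp.memLp F)
  have hFG' : Integrable (fun x => ‖F x‖ ^ θ + ‖G x‖ ^ θ - ‖F x‖ ^ (θ - 1) * ‖G x‖) μ :=
    (hF.add hG).sub hFG
  calc (‖F‖ ^ (θ - 1) - ‖G‖ ^ (θ - 1)) * (‖F‖ - ‖G‖)
      = ‖F‖ ^ θ + ‖G‖ ^ θ - ‖F‖ ^ (θ - 1) * ‖G‖ - ‖G‖ ^ (θ - 1) * ‖F‖ :=
        (Real.rpow_add_rpow_sub_rpow_sub_one_mul hθ₀.ne' (Lp.norm_nonneg' F)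
          (Lp.norm_nonneg' G)).symm
    _ ≤ (∫ x, ‖F x‖ ^ θ ∂μ) + (∫ x, ‖G x‖ ^ θ ∂μ) - (∫ x, ‖F x‖ ^ (θ - 1) * ‖G x‖ ∂μ)
          - ∫ x, ‖G x‖ ^ (θ - 1) * ‖F x‖ ∂μ := by
        rw [Lp.integral_norm_rpow_eq hθ₀, Lp.integral_norm_rpow_eq hθ₀]
        linarith [Lp.integral_norm_rpow_sub_one_mul_norm_le hθ F G,
          Lp.integral_norm_rpow_sub_one_mul_norm_le hθ G F]
    _ = ∫ x, (‖F x‖ ^ θ + ‖G x‖ ^ θ - ‖F x‖ ^ (θ - 1) * ‖G x‖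
          - ‖G x‖ ^ (θ - 1) * ‖F x‖) ∂μ := by
        rw [integral_sub hFG' hGF, integral_sub ?_ hFG, integral_add hF hG]
        exact hF.add hG
    _ ≤ _ := integral_mono (hFG'.sub hGF)
        ((Lp.memLp F).integrable_inner_rpow_sub_two_smul_sub hθ (Lp.memLp G))
        fun x => le_inner_rpow_sub_two_smul_sub hθ₀.ne' hθ.ne' (F x) (G x)

end MeasureTheory

theorem stmt_5_general {X : Type*} [MeasurableSpace X] (μ : Measure X)
    (N : ℕ) (θ : ℝ) (hθ : 1 < θ)
    (F G : Lp (EuclideanSpace ℝ (Fin N)) (ENNReal.ofReal θ) μ) :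
    Integrable
        (fun x => ⟪(‖F x‖ ^ (θ - 2)) • F x - (‖G x‖ ^ (θ - 2)) • G x, F x - G x⟫) μ ∧
      (‖F‖ ^ (θ - 1) - ‖G‖ ^ (θ - 1)) * (‖F‖ - ‖G‖)
        ≤ ∫ x, ⟪(‖F x‖ ^ (θ - 2)) • F x - (‖G x‖ ^ (θ - 2)) • G x, F x - G x⟫ ∂μ ∧
      0 ≤ (‖F‖ ^ (θ - 1) - ‖G‖ ^ (θ - 1)) * (‖F‖ - ‖G‖) :=
  ⟨(Lp.memLp F).integrable_inner_rpow_sub_two_smul_sub hθ (Lp.memLp G),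
    Lp.rpow_sub_one_sub_mul_sub_le_integral_inner hθ F G,
    Real.rpow_sub_one_sub_mul_sub_nonneg hθ.le (Lp.norm_nonneg' F) (Lp.norm_nonneg' G)⟩

/-- Monotonicity-type inequality: for `F, G ∈ L^θ(X, μ; ℝ^N)`, the integrand
`(|F|^{θ-2}F - |G|^{θ-2}G) · (F - G)` is integrable and its integral is bounded below by
`(‖F‖_θ^{θ-1} - ‖G‖_θ^{θ-1})(‖F‖_θ - ‖G‖_θ) ≥ 0`. -/
theorem stmt_5 {X : Type*} [MeasurableSpace X] (μ : Measure X)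
    (N : ℕ) (hN : 1 ≤ N) (θ : ℝ) (hθ : 1 < θ) [Fact (1 ≤ ENNReal.ofReal θ)]
    (F G : Lp (EuclideanSpace ℝ (Fin N)) (ENNReal.ofReal θ) μ) :
    Integrable
        (fun x => ⟪(‖F x‖ ^ (θ - 2)) • F x - (‖G x‖ ^ (θ - 2)) • G x, F x - G x⟫) μ ∧
      (‖F‖ ^ (θ - 1) - ‖G‖ ^ (θ - 1)) * (‖F‖ - ‖G‖)
        ≤ ∫ x, ⟪(‖F x‖ ^ (θ - 2)) • F x - (‖G x‖ ^ (θ - 2)) • G x, F x - G x⟫ ∂μ ∧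
      0 ≤ (‖F‖ ^ (θ - 1) - ‖G‖ ^ (θ - 1)) * (‖F‖ - ‖G‖) :=
  stmt_5_general μ N θ hθ F G
end

section
/- Let V be a real vector space and let p, q > 1 be real numbers with p ≠ q. Let A, B, K : V → ℝ be nonnegative functions that are positively homogeneous of degrees p, q and q respectively, i.e. A(t v) = t^p A(v), B(t v) = t^q B(v) and K(t v) = t^q K(v) for all t > 0 and v ∈ V. Let C ⊆ V be a set closed under multiplication by positive scalars, and suppose the set S = { v ∈ C : K(v) > 0 } is nonempty. Then the infimum over v ∈ S of ( (1/p) A(v) + (1/q) B(v) ) / ( (1/q) K(v) ) is equal to the infimum over v ∈ S of B(v) / K(v). -/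
/-- Abstract scaling identity: for nonnegative functionals `A, B, K` positively homogeneous
of degrees `p, q, q` on a real vector space, the infimum of
`((1/p) A + (1/q) B) / ((1/q) K)` over `{v ∈ C : K v > 0}` equals that of `B / K`. -/
theorem stmt_7 {V : Type*} [AddCommGroup V] [Module ℝ V]
    (p q : ℝ) (hp : 1 < p) (hq : 1 < q) (hpq : p ≠ q)
    (A B K : V → ℝ)
    (hA0 : ∀ v, 0 ≤ A v) (hB0 : ∀ v, 0 ≤ B v) (hK0 : ∀ v, 0 ≤ K v)
    (hA : ∀ t : ℝ, 0 < t → ∀ v, A (t • v) = t ^ p * A v)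
    (hB : ∀ t : ℝ, 0 < t → ∀ v, B (t • v) = t ^ q * B v)
    (hK : ∀ t : ℝ, 0 < t → ∀ v, K (t • v) = t ^ q * K v)
    (C : Set V) (hC : ∀ t : ℝ, 0 < t → ∀ v ∈ C, t • v ∈ C)
    (hS : ∃ v ∈ C, 0 < K v) :
    sInf ((fun v => ((1 / p) * A v + (1 / q) * B v) / ((1 / q) * K v)) ''
        {v | v ∈ C ∧ 0 < K v})
      = sInf ((fun v => B v / K v) '' {v | v ∈ C ∧ 0 < K v}) := by
  obtain ⟨v₀, hv₀C, hv₀K⟩ := hS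
  have hp0 : (0:ℝ) < p := lt_trans one_pos hp
  have hq0 : (0:ℝ) < q := lt_trans one_pos hq
  set S : Set V := {v | v ∈ C ∧ 0 < K v} with hSdef
  have hSne : S.Nonempty := ⟨v₀, ⟨hv₀C, hv₀K⟩⟩
  set F : V → ℝ := fun v => ((1 / p) * A v + (1 / q) * B v) / ((1 / q) * K v) with hFdef
  set G : V → ℝ := fun v => B v / K v with hGdef
  have hbF : BddBelow (F '' S) := by
    refine ⟨0, ?_⟩
    rintro x ⟨v, hv, rfl⟩
    exact div_nonneg (add_nonneg (mul_nonneg (by positivity) (hA0 v))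
      (mul_nonneg (by positivity) (hB0 v))) (mul_nonneg (by positivity) (hK0 v))
  have hbG : BddBelow (G '' S) := by
    refine ⟨0, ?_⟩
    rintro x ⟨v, hv, rfl⟩
    exact div_nonneg (hB0 v) (hK0 v)
  have hFG : ∀ v ∈ S, G v ≤ F v := by
    intro v hv
    have hKv : 0 < K v := hv.2
    have hGeq : G v = ((1 / q) * B v) / ((1 / q) * K v) := by
      simp only [hGdef]
      rw [mul_div_mul_left _ _ (by positivity : (1:ℝ)/q ≠ 0)]
    rw [hGeq]
    have hA' : 0 ≤ (1 / p) * A v := by have := hA0 v; positivity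
    have hd : 0 < (1 / q) * K v := by positivity
    simp only [hFdef]
    gcongr
    linarith
  -- key scaling identity
  have hscale : ∀ v ∈ S, ∀ t : ℝ, 0 < t →
      F (t • v) = (q / p) * t ^ (p - q) * (A v / K v) + G v := by
    intro v hv t ht
    have hKv : 0 < K v := hv.2
    have htq : (0:ℝ) < t ^ q := Real.rpow_pos_of_pos ht q
    have htp : t ^ p = t ^ (p - q) * t ^ q := by
      rw [← Real.rpow_add ht]; ring_nf
    simp only [hFdef, hGdef, hA t ht, hB t ht, hK t ht, htp]
    field_simp
  apply le_antisymm
  · -- inf F ≤ inf G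
    apply le_csInf (hSne.image G)
    rintro b ⟨v, hv, rfl⟩
    have hKv : 0 < K v := hv.2
    apply le_of_forall_pos_le_add
    intro ε hε
    set c : ℝ := (q / p) * (A v / K v) with hc
    have hc0 : 0 ≤ c := by have := hA0 v; positivity
    obtain ⟨t, ht, htc⟩ : ∃ t : ℝ, 0 < t ∧ c * t ^ (p - q) ≤ ε := by
      rcases eq_or_lt_of_le hc0 with h0 | h0
      · exact ⟨1, one_pos, by rw [← h0]; simpa using hε.le⟩
      · refine ⟨(ε / c) ^ (1 / (p - q)), Real.rpow_pos_of_pos (by positivity) _, ?_⟩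
        rw [one_div, Real.rpow_inv_rpow (by positivity) (sub_ne_zero.mpr hpq),
          mul_div_cancel₀ _ (ne_of_gt h0)]
    have hmem : t • v ∈ S := ⟨hC t ht v hv.1, by rw [hK t ht]; positivity⟩
    have hle : sInf (F '' S) ≤ F (t • v) := csInf_le hbF ⟨t • v, hmem, rfl⟩
    rw [hscale v hv t ht] at hle
    calc sInf (F '' S) ≤ (q / p) * t ^ (p - q) * (A v / K v) + G v := hle
      _ = c * t ^ (p - q) + G v := by rw [hc]; ring
      _ ≤ G v + ε := by linarith
  · -- inf G ≤ inf F
    apply le_csInf (hSne.image F)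
    rintro b ⟨v, hv, rfl⟩
    exact le_trans (csInf_le hbG ⟨v, hv, rfl⟩) (hFG v hv)
end
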